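/- Consider a finite discounted MDP with 2 ≤ |A| and rewards satisfying 0 ≤ r s a ≤ 1 for all s, a. Let π_D be a policy (the behavior policy) with nonempty support at every state, and let v*_D : S → ℝ satisfy the in-sample Bellman optimality equation: v*_D s = max over those a with π_D s a > 0 of (r s a + γ * ∑_{s'} P s a s' * v*_D s'), for every s. For k ≥ 1, there exists τ > 0 such that the CPI iterates π_0, ..., π_{k-1} with parameter τ and behavior policy π_D, with value functions v_0, ..., v_{k-1}, satisfy for every state s: v*_D s − v_{k-1} s ≤ (1/(1 − γ)^2) * Real.sqrt (2 * Real.log |A| / k). (This is the paper's Theorem 1: in the tabular setting, conservative policy iteration converges to the in-sample optimal value.) -/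

import Mathlib

open Finset

/-- If `w = c + γ P w` with `c ≥ 0` and `P` row-stochastic, then `w ≥ 0`. -/
lemma stmt15_aux_nonneg {S : Type*} [Fintype S] [Nonempty S]
    (p : S → S → ℝ) (hp0 : ∀ s s', 0 ≤ p s s') (hp1 : ∀ s, ∑ s', p s s' = 1)
    (γ : ℝ) (hγ0 : 0 ≤ γ) (hγ1 : γ < 1)
    (w c : S → ℝ) (hc : ∀ s, 0 ≤ c s)
    (hw : ∀ s, w s = c s + γ * ∑ s', p s s' * w s') : ∀ s, 0 ≤ w s := by
  obtain ⟨s0, -, hs0⟩ := Finset.exists_min_image Finset.univ w ⟨Classical.arbitrary S, mem_univ _⟩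
  have hmin : ∀ s, w s0 ≤ w s := fun s => hs0 s (mem_univ s)
  have h1 : w s0 ≤ ∑ s', p s0 s' * w s' := by
    calc w s0 = ∑ s', p s0 s' * w s0 := by rw [← Finset.sum_mul, hp1, one_mul]
    _ ≤ ∑ s', p s0 s' * w s' :=
      Finset.sum_le_sum fun s' _ => mul_le_mul_of_nonneg_left (hmin s') (hp0 s0 s')
  have h2 : c s0 + γ * w s0 ≤ w s0 := by
    have h := hw s0
    have := mul_le_mul_of_nonneg_left h1 hγ0; linarith
  have h3 : 0 ≤ w s0 := by nlinarith [hc s0]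
  exact fun s => le_trans h3 (hmin s)

/-- If `w = c + γ P w` with `c ≤ B` and `P` row-stochastic, then `w ≤ B/(1-γ)`. -/
lemma stmt15_aux_le {S : Type*} [Fintype S] [Nonempty S]
    (p : S → S → ℝ) (hp0 : ∀ s s', 0 ≤ p s s') (hp1 : ∀ s, ∑ s', p s s' = 1)
    (γ : ℝ) (hγ0 : 0 ≤ γ) (hγ1 : γ < 1)
    (w c : S → ℝ) (B : ℝ) (hc : ∀ s, c s ≤ B)
    (hw : ∀ s, w s = c s + γ * ∑ s', p s s' * w s') : ∀ s, w s ≤ B / (1 - γ) := by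
  obtain ⟨s0, -, hs0⟩ := Finset.exists_max_image Finset.univ w ⟨Classical.arbitrary S, mem_univ _⟩
  have hmax : ∀ s, w s ≤ w s0 := fun s => hs0 s (mem_univ s)
  have h1 : ∑ s', p s0 s' * w s' ≤ w s0 := by
    calc ∑ s', p s0 s' * w s' ≤ ∑ s', p s0 s' * w s0 :=
        Finset.sum_le_sum fun s' _ => mul_le_mul_of_nonneg_left (hmax s') (hp0 s0 s')
    _ = w s0 := by rw [← Finset.sum_mul, hp1, one_mul]
  have h2 : w s0 ≤ B + γ * w s0 := by
    have h := hw s0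
    have := mul_le_mul_of_nonneg_left h1 hγ0; linarith [hc s0]
  have h3 : w s0 ≤ B / (1 - γ) := by
    rw [le_div_iff₀ (by linarith)]; nlinarith
  exact fun s => le_trans (hmax s) h3

/-- Chebyshev sum inequality for similarly ordered pairs with prob weights. -/
lemma stmt15_aux_tilt {A : Type*} [Fintype A] (p f g : A → ℝ)
    (hp0 : ∀ a, 0 ≤ p a) (hp1 : ∑ a, p a = 1)
    (hmono : ∀ a b, 0 ≤ (f a - f b) * (g a - g b)) :
    (∑ a, p a * f a) * (∑ a, p a * g a) ≤ ∑ a, p a * (f a * g a) := by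
  have key : 0 ≤ ∑ a, ∑ b, p a * p b * ((f a - f b) * (g a - g b)) :=
    Finset.sum_nonneg fun a _ => Finset.sum_nonneg fun b _ =>
      mul_nonneg (mul_nonneg (hp0 a) (hp0 b)) (hmono a b)
  have expand : ∑ a, ∑ b, p a * p b * ((f a - f b) * (g a - g b))
      = 2 * (∑ a, p a * (f a * g a)) - 2 * ((∑ a, p a * f a) * (∑ a, p a * g a)) := by
    have inner : ∀ a, ∑ b, p a * p b * ((f a - f b) * (g a - g b)) =
        p a * (f a * g a) * (∑ b, p b) - p a * f a * (∑ b, p b * g b)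
        - p a * g a * (∑ b, p b * f b) + p a * (∑ b, p b * (f b * g b)) := by
      intro a
      simp only [Finset.mul_sum]
      rw [← Finset.sum_sub_distrib, ← Finset.sum_sub_distrib, ← Finset.sum_add_distrib]
      exact Finset.sum_congr rfl fun b _ => by ring
    calc ∑ a, ∑ b, p a * p b * ((f a - f b) * (g a - g b))
        = ∑ a, (p a * (f a * g a) * (∑ b, p b) - p a * f a * (∑ b, p b * g b)
          - p a * g a * (∑ b, p b * f b) + p a * (∑ b, p b * (f b * g b))) :=
        Finset.sum_congr rfl fun a _ => inner a
      _ = (∑ a, p a * (f a * g a)) * (∑ b, p b) - (∑ a, p a * f a) * (∑ b, p b * g b)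
          - (∑ a, p a * g a) * (∑ b, p b * f b) + (∑ a, p a) * (∑ b, p b * (f b * g b)) := by
        rw [Finset.sum_add_distrib, Finset.sum_sub_distrib, Finset.sum_sub_distrib]
        simp only [← Finset.sum_mul]
      _ = 2 * (∑ a, p a * (f a * g a)) - 2 * ((∑ a, p a * f a) * (∑ a, p a * g a)) := by
        rw [hp1]; ring
  linarith

/-- Sub-Gaussian MGF bound with constant 1/2, via symmetrization and `cosh ≤ exp (x²/2)`. -/
lemma stmt15_aux_mgf {A : Type*} [Fintype A] (p f : A → ℝ)
    (hp0 : ∀ a, 0 ≤ p a) (hp1 : ∑ a, p a = 1)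
    (R η : ℝ) (hfab : ∀ a b, |f a - f b| ≤ R) :
    Real.log (∑ a, p a * Real.exp (η * f a)) ≤ η * (∑ a, p a * f a) + η ^ 2 * R ^ 2 / 2 := by
  set μ := ∑ a, p a * f a with hμ
  have jensen : ∀ (c : ℝ), Real.exp (c * μ) ≤ ∑ a, p a * Real.exp (c * f a) := by
    intro c
    have h := convexOn_exp.map_sum_le (t := Finset.univ) (w := p) (p := fun a => c * f a)
      (fun a _ => hp0 a) hp1 (fun a _ => Set.mem_univ _)
    simp only [smul_eq_mul] at h
    calc Real.exp (c * μ) = Real.exp (∑ a, p a * (c * f a)) := by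
          rw [hμ, Finset.mul_sum]
          congr 1
          exact Finset.sum_congr rfl fun a _ => by ring
      _ ≤ ∑ a, p a * Real.exp (c * f a) := h
  have hZpos : (0:ℝ) < ∑ a, p a * Real.exp (η * f a) :=
    lt_of_lt_of_le (Real.exp_pos _) (jensen η)
  have hWpos : (0:ℝ) < ∑ a, p a * Real.exp (-η * f a) :=
    lt_of_lt_of_le (Real.exp_pos _) (jensen (-η))
  -- Z * W ≤ exp(η²R²/2)
  have hZW : (∑ a, p a * Real.exp (η * f a)) * (∑ a, p a * Real.exp (-η * f a))
      ≤ Real.exp (η ^ 2 * R ^ 2 / 2) := by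
    have hprod : (∑ a, p a * Real.exp (η * f a)) * (∑ b, p b * Real.exp (-η * f b))
        = ∑ a, ∑ b, p a * p b * Real.exp (η * (f a - f b)) := by
      rw [Finset.sum_mul]
      refine Finset.sum_congr rfl fun a _ => ?_
      rw [Finset.mul_sum]
      refine Finset.sum_congr rfl fun b _ => ?_
      rw [show η * (f a - f b) = η * f a + (-η * f b) by ring, Real.exp_add]; ring
    rw [hprod]
    have hsymm : ∑ a, ∑ b, p a * p b * Real.exp (η * (f a - f b))
        = ∑ a, ∑ b, p a * p b * Real.cosh (η * (f a - f b)) := by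
      have h1 : ∑ a, ∑ b, p a * p b * Real.exp (η * (f a - f b))
          = ∑ a, ∑ b, p a * p b * Real.exp (-(η * (f a - f b))) := by
        rw [Finset.sum_comm]
        refine Finset.sum_congr rfl fun a _ => Finset.sum_congr rfl fun b _ => ?_
        ring_nf
      have h2 : ∑ a, ∑ b, p a * p b * Real.cosh (η * (f a - f b))
          = ((∑ a, ∑ b, p a * p b * Real.exp (η * (f a - f b)))
            + ∑ a, ∑ b, p a * p b * Real.exp (-(η * (f a - f b)))) / 2 := by
        rw [← Finset.sum_add_distrib, Finset.sum_div]
        refine Finset.sum_congr rfl fun a _ => ?_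
        rw [← Finset.sum_add_distrib, Finset.sum_div]
        refine Finset.sum_congr rfl fun b _ => ?_
        rw [Real.cosh_eq]; ring
      linarith [h2, h1]
    rw [hsymm]
    calc ∑ a, ∑ b, p a * p b * Real.cosh (η * (f a - f b))
        ≤ ∑ a, ∑ b, p a * p b * Real.exp (η ^ 2 * R ^ 2 / 2) := by
          refine Finset.sum_le_sum fun a _ => Finset.sum_le_sum fun b _ => ?_
          refine mul_le_mul_of_nonneg_left ?_ (mul_nonneg (hp0 a) (hp0 b))
          calc Real.cosh (η * (f a - f b)) ≤ Real.exp ((η * (f a - f b)) ^ 2 / 2) :=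
              Real.cosh_le_exp_half_sq _
          _ ≤ Real.exp (η ^ 2 * R ^ 2 / 2) := by
              apply Real.exp_le_exp.2
              have h1 : (f a - f b) ^ 2 ≤ R ^ 2 := by
                have := hfab a b
                have h2 : |f a - f b| ^ 2 ≤ R ^ 2 :=
                  pow_le_pow_left₀ (abs_nonneg _) this 2
                simpa [sq_abs] using h2
              nlinarith [sq_nonneg η, sq_nonneg (f a - f b)]
      _ = Real.exp (η ^ 2 * R ^ 2 / 2) := by
          simp only [mul_assoc, ← Finset.mul_sum, ← Finset.sum_mul, hp1, one_mul]
  have hW : Real.exp (-η * μ) ≤ ∑ a, p a * Real.exp (-η * f a) := jensen (-η)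
  have hZ : (∑ a, p a * Real.exp (η * f a)) ≤ Real.exp (η * μ + η ^ 2 * R ^ 2 / 2) := by
    have h1 : (∑ a, p a * Real.exp (η * f a)) * Real.exp (-η * μ)
        ≤ Real.exp (η ^ 2 * R ^ 2 / 2) :=
      le_trans (mul_le_mul_of_nonneg_left hW (le_of_lt hZpos)) hZW
    have h2 := mul_le_mul_of_nonneg_right h1 (le_of_lt (Real.exp_pos (η * μ)))
    calc (∑ a, p a * Real.exp (η * f a))
        = (∑ a, p a * Real.exp (η * f a)) * Real.exp (-η * μ) * Real.exp (η * μ) := by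
          rw [mul_assoc, ← Real.exp_add]; simp
      _ ≤ Real.exp (η ^ 2 * R ^ 2 / 2) * Real.exp (η * μ) := h2
      _ = Real.exp (η * μ + η ^ 2 * R ^ 2 / 2) := by rw [← Real.exp_add]; ring_nf
  calc Real.log (∑ a, p a * Real.exp (η * f a))
      ≤ Real.log (Real.exp (η * μ + η ^ 2 * R ^ 2 / 2)) :=
        Real.log_le_log hZpos hZ
    _ = η * μ + η ^ 2 * R ^ 2 / 2 := Real.log_exp _

/-- Theorem 1 of the paper: in the tabular setting, conservative policy iteration
converges to the in-sample optimal value. -/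
theorem stmt_15 {S A : Type*} [Fintype S] [Nonempty S] [Fintype A]
    (hA : 2 ≤ Fintype.card A)
    (P : S → A → S → ℝ) (hP0 : ∀ s a s', 0 ≤ P s a s') (hP1 : ∀ s a, ∑ s', P s a s' = 1)
    (r : S → A → ℝ) (hr : ∀ s a, 0 ≤ r s a ∧ r s a ≤ 1)
    (γ : ℝ) (hγ0 : 0 ≤ γ) (hγ1 : γ < 1)
    (πD : S → A → ℝ) (hπD : ∀ s, (∀ a, 0 ≤ πD s a) ∧ ∑ a, πD s a = 1)
    (hne : ∀ s, (Finset.univ.filter (fun a => 0 < πD s a)).Nonempty)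
    (vD : S → ℝ)
    (hvD : ∀ s, vD s = (Finset.univ.filter (fun a => 0 < πD s a)).sup' (hne s)
      (fun a => r s a + γ * ∑ s', P s a s' * vD s'))
    (k : ℕ) (hk : 1 ≤ k) :
    ∃ τ > (0 : ℝ), ∀ (π : ℕ → S → A → ℝ) (v : ℕ → S → ℝ) (Q : ℕ → S → A → ℝ),
      (∀ s a, π 0 s a = if 0 < πD s a then
        1 / ((Finset.univ.filter (fun b => 0 < πD s b)).card : ℝ) else 0) →
      (∀ t s, v t s =
        (∑ a, π t s a * r s a) + γ * ∑ s', (∑ a, π t s a * P s a s') * v t s') →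
      (∀ t s a, Q t s a = r s a + γ * ∑ s', P s a s' * v t s') →
      (∀ t s a, π (t + 1) s a =
        π t s a * Real.exp (Q t s a / τ) / (∑ b, π t s b * Real.exp (Q t s b / τ))) →
      ∀ s, vD s - v (k - 1) s ≤
        (1 / (1 - γ) ^ 2) * Real.sqrt (2 * Real.log (Fintype.card A) / (k : ℝ)) := by
  classical
  have hγ' : (0:ℝ) < 1 - γ := by linarith
  set L := Real.log (Fintype.card A) with hLdef
  have hL : 0 < L := by
    have h2 : (2:ℝ) ≤ (Fintype.card A : ℝ) := by exact_mod_cast hA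
    exact Real.log_pos (by linarith)
  have hkpos : (0:ℝ) < (k:ℝ) := by exact_mod_cast hk
  set σ := Real.sqrt (2 * L / (k:ℝ)) with hσdef
  have hσpos : 0 < σ := Real.sqrt_pos.2 (by positivity)
  have hσ2 : σ ^ 2 = 2 * L / (k:ℝ) := Real.sq_sqrt (by positivity)
  set η := (1 - γ) * σ with hηdef
  have hηpos : 0 < η := mul_pos hγ' hσpos
  refine ⟨1/η, by positivity, ?_⟩
  intro π v Q hπ0 hv hQ hπs
  have hdiv : ∀ x : ℝ, x / (1/η) = η * x := fun x => by rw [div_eq_mul_inv, one_div, inv_inv, mul_comm]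
  have hπs' : ∀ t s a, π (t + 1) s a =
      π t s a * Real.exp (η * Q t s a) / (∑ b, π t s b * Real.exp (η * Q t s b)) := by
    intro t s a
    rw [hπs t s a]
    simp only [hdiv]
  -- probability facts about the iterates
  have hprob : ∀ t s, (∀ a, 0 ≤ π t s a) ∧ (∑ a, π t s a = 1) ∧
      (∀ a, ¬ 0 < πD s a → π t s a = 0) ∧ (∀ a, 0 < πD s a → 0 < π t s a) := by
    intro t
    induction t with
    | zero =>
      intro s
      have hcard : 0 < ((Finset.univ.filter (fun a => 0 < πD s a)).card : ℝ) := by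
        exact_mod_cast Finset.card_pos.2 (hne s)
      refine ⟨?_, ?_, ?_, ?_⟩
      · intro a; rw [hπ0 s a]; split
        · exact (one_div_pos.2 hcard).le
        · exact le_refl 0
      · calc ∑ a, π 0 s a
            = ∑ a, if 0 < πD s a then
              1 / ((Finset.univ.filter (fun b => 0 < πD s b)).card : ℝ) else 0 :=
            Finset.sum_congr rfl fun a _ => hπ0 s a
          _ = ∑ a ∈ Finset.univ.filter (fun a => 0 < πD s a),
              1 / ((Finset.univ.filter (fun b => 0 < πD s b)).card : ℝ) :=
            (Finset.sum_filter _ _).symm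
          _ = 1 := by
            rw [Finset.sum_const, nsmul_eq_mul]
            rw [mul_one_div, div_self hcard.ne']
      · intro a ha; rw [hπ0 s a, if_neg ha]
      · intro a ha; rw [hπ0 s a, if_pos ha]; exact one_div_pos.2 hcard
    | succ t ih =>
      intro s
      obtain ⟨ih1, ih2, ih3, ih4⟩ := ih s
      have hZpos : 0 < ∑ b, π t s b * Real.exp (η * Q t s b) := by
        obtain ⟨a0, ha0⟩ := hne s
        have ha0' : 0 < πD s a0 := (Finset.mem_filter.1 ha0).2
        exact Finset.sum_pos' (fun b _ => mul_nonneg (ih1 b) (Real.exp_pos _).le)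
          ⟨a0, Finset.mem_univ _, mul_pos (ih4 a0 ha0') (Real.exp_pos _)⟩
      refine ⟨?_, ?_, ?_, ?_⟩
      · intro a; rw [hπs' t s a]
        exact div_nonneg (mul_nonneg (ih1 a) (Real.exp_pos _).le) hZpos.le
      · calc ∑ a, π (t+1) s a
            = ∑ a, π t s a * Real.exp (η * Q t s a)
              / (∑ b, π t s b * Real.exp (η * Q t s b)) :=
            Finset.sum_congr rfl fun a _ => hπs' t s a
          _ = 1 := by rw [← Finset.sum_div, div_self hZpos.ne']
      · intro a ha; rw [hπs' t s a, ih3 a ha]; simp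
      · intro a ha; rw [hπs' t s a]
        exact div_pos (mul_pos (ih4 a ha) (Real.exp_pos _)) hZpos
  have hZpos : ∀ t s, 0 < ∑ b, π t s b * Real.exp (η * Q t s b) := by
    intro t s
    obtain ⟨a0, ha0⟩ := hne s
    have ha0' : 0 < πD s a0 := (Finset.mem_filter.1 ha0).2
    exact Finset.sum_pos' (fun b _ => mul_nonneg ((hprob t s).1 b) (Real.exp_pos _).le)
      ⟨a0, Finset.mem_univ _, mul_pos ((hprob t s).2.2.2 a0 ha0') (Real.exp_pos _)⟩
  -- value function bounds
  have hvbound : ∀ t s, 0 ≤ v t s ∧ v t s ≤ 1 / (1 - γ) := by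
    intro t
    have hrow0 : ∀ s s', 0 ≤ ∑ a, π t s a * P s a s' := fun s s' =>
      Finset.sum_nonneg fun a _ => mul_nonneg ((hprob t s).1 a) (hP0 s a s')
    have hrow1 : ∀ s, ∑ s', ∑ a, π t s a * P s a s' = 1 := by
      intro s
      rw [Finset.sum_comm]
      calc ∑ a, ∑ s', π t s a * P s a s' = ∑ a, π t s a * ∑ s', P s a s' :=
            Finset.sum_congr rfl fun a _ => (Finset.mul_sum _ _ _).symm
        _ = 1 := by
            simp only [hP1, mul_one]
            exact (hprob t s).2.1
    have h0 := stmt15_aux_nonneg (fun s s' => ∑ a, π t s a * P s a s') hrow0 hrow1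
      γ hγ0 hγ1 (v t) (fun s => ∑ a, π t s a * r s a)
      (fun s => Finset.sum_nonneg fun a _ => mul_nonneg ((hprob t s).1 a) (hr s a).1)
      (hv t)
    have h1 := stmt15_aux_le (fun s s' => ∑ a, π t s a * P s a s') hrow0 hrow1
      γ hγ0 hγ1 (v t) (fun s => ∑ a, π t s a * r s a) 1
      (fun s => by
        calc ∑ a, π t s a * r s a ≤ ∑ a, π t s a * 1 :=
              Finset.sum_le_sum fun a _ =>
                mul_le_mul_of_nonneg_left (hr s a).2 ((hprob t s).1 a)
          _ = 1 := by simp [(hprob t s).2.1])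
      (hv t)
    exact fun s => ⟨h0 s, h1 s⟩
  -- Q function bounds
  have hQ0 : ∀ t s a, 0 ≤ Q t s a := by
    intro t s a
    rw [hQ t s a]
    have : 0 ≤ ∑ s', P s a s' * v t s' :=
      Finset.sum_nonneg fun s' _ => mul_nonneg (hP0 s a s') (hvbound t s').1
    nlinarith [(hr s a).1]
  have hQR : ∀ t s a, Q t s a ≤ 1 / (1 - γ) := by
    intro t s a
    rw [hQ t s a]
    have h1 : ∑ s', P s a s' * v t s' ≤ 1 / (1 - γ) := by
      calc ∑ s', P s a s' * v t s' ≤ ∑ s', P s a s' * (1 / (1 - γ)) :=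
            Finset.sum_le_sum fun s' _ =>
              mul_le_mul_of_nonneg_left (hvbound t s').2 (hP0 s a s')
        _ = 1 / (1 - γ) := by rw [← Finset.sum_mul, hP1, one_mul]
    have h2 : 1 + γ * (1 / (1 - γ)) = 1 / (1 - γ) := by field_simp; ring
    nlinarith [(hr s a).2]
  -- mixed-policy expansion of Q-averages
  have hmix : ∀ t' t s, ∑ a, π t' s a * Q t s a
      = (∑ a, π t' s a * r s a) + γ * ∑ s', (∑ a, π t' s a * P s a s') * v t s' := by
    intro t' t s
    have inner : ∀ a, π t' s a * Q t s a
        = π t' s a * r s a + γ * ∑ s', π t' s a * (P s a s' * v t s') := by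
      intro a
      rw [hQ t s a, show π t' s a * (r s a + γ * ∑ s', P s a s' * v t s')
          = π t' s a * r s a + γ * (π t' s a * ∑ s', P s a s' * v t s') from by ring,
        Finset.mul_sum]
    have h2 : ∑ s', (∑ a, π t' s a * P s a s') * v t s'
        = ∑ a, ∑ s', π t' s a * (P s a s' * v t s') := by
      calc ∑ s', (∑ a, π t' s a * P s a s') * v t s'
          = ∑ s', ∑ a, π t' s a * (P s a s' * v t s') := by
            refine Finset.sum_congr rfl fun s' _ => ?_
            rw [Finset.sum_mul]
            exact Finset.sum_congr rfl fun a _ => by ring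
        _ = ∑ a, ∑ s', π t' s a * (P s a s' * v t s') := Finset.sum_comm
    calc ∑ a, π t' s a * Q t s a
        = ∑ a, (π t' s a * r s a + γ * ∑ s', π t' s a * (P s a s' * v t s')) :=
          Finset.sum_congr rfl fun a _ => inner a
      _ = (∑ a, π t' s a * r s a) + ∑ a, γ * ∑ s', π t' s a * (P s a s' * v t s') :=
          Finset.sum_add_distrib
      _ = (∑ a, π t' s a * r s a) + γ * ∑ a, ∑ s', π t' s a * (P s a s' * v t s') := by
          rw [← Finset.mul_sum]
      _ = (∑ a, π t' s a * r s a) + γ * ∑ s', (∑ a, π t' s a * P s a s') * v t s' := by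
          rw [h2]
  have hvQ : ∀ t s, v t s = ∑ a, π t s a * Q t s a := by
    intro t s
    rw [hv t s, hmix t t s]
  -- in-sample optimal action
  have hstar : ∀ s, ∃ a, (0 < πD s a) ∧ vD s = r s a + γ * ∑ s', P s a s' * vD s' := by
    intro s
    obtain ⟨a, ha, hEq⟩ := Finset.exists_mem_eq_sup' (hne s)
      (fun a => r s a + γ * ∑ s', P s a s' * vD s')
    exact ⟨a, (Finset.mem_filter.1 ha).2, by rw [hvD s, hEq]⟩
  choose astar hastar_pos hastar_eq using hstar
  -- soft policy improvement: expected Q does not decrease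
  have himp : ∀ t s, ∑ a, π t s a * Q t s a ≤ ∑ a, π (t+1) s a * Q t s a := by
    intro t s
    have hZ := hZpos t s
    have hmono : ∀ a b, 0 ≤ (Q t s a - Q t s b) *
        (Real.exp (η * Q t s a) - Real.exp (η * Q t s b)) := by
      intro a b
      rcases le_total (Q t s a) (Q t s b) with h | h
      · have he : Real.exp (η * Q t s a) ≤ Real.exp (η * Q t s b) :=
          Real.exp_le_exp.2 (mul_le_mul_of_nonneg_left h hηpos.le)
        nlinarith
      · have he : Real.exp (η * Q t s b) ≤ Real.exp (η * Q t s a) :=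
          Real.exp_le_exp.2 (mul_le_mul_of_nonneg_left h hηpos.le)
        exact mul_nonneg (by linarith) (by linarith)
    have key := stmt15_aux_tilt (π t s) (Q t s) (fun a => Real.exp (η * Q t s a))
      (hprob t s).1 (hprob t s).2.1 hmono
    have hrw : ∑ a, π (t+1) s a * Q t s a
        = (∑ a, π t s a * (Q t s a * Real.exp (η * Q t s a)))
          / (∑ b, π t s b * Real.exp (η * Q t s b)) := by
      rw [Finset.sum_div]
      refine Finset.sum_congr rfl fun a _ => ?_
      rw [hπs' t s a]
      ring
    rw [hrw, le_div_iff₀ hZ]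
    exact key
  -- monotone improvement of values
  have hmonov : ∀ t s, v t s ≤ v (t+1) s := by
    intro t
    have hrow0 : ∀ s s', 0 ≤ ∑ a, π (t+1) s a * P s a s' := fun s s' =>
      Finset.sum_nonneg fun a _ => mul_nonneg ((hprob (t+1) s).1 a) (hP0 s a s')
    have hrow1 : ∀ s, ∑ s', ∑ a, π (t+1) s a * P s a s' = 1 := by
      intro s
      rw [Finset.sum_comm]
      calc ∑ a, ∑ s', π (t+1) s a * P s a s' = ∑ a, π (t+1) s a * ∑ s', P s a s' :=
            Finset.sum_congr rfl fun a _ => (Finset.mul_sum _ _ _).symm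
        _ = 1 := by
            simp only [hP1, mul_one]
            exact (hprob (t+1) s).2.1
    have h := stmt15_aux_nonneg (fun s s' => ∑ a, π (t+1) s a * P s a s') hrow0 hrow1
      γ hγ0 hγ1 (fun s => v (t+1) s - v t s)
      (fun s => (∑ a, π (t+1) s a * Q t s a) - v t s)
      (fun s => by
        show (0:ℝ) ≤ (∑ a, π (t+1) s a * Q t s a) - v t s
        have h1 := himp t s
        have h2 := hvQ t s
        linarith)
      (fun s => by
        show v (t+1) s - v t s = ((∑ a, π (t+1) s a * Q t s a) - v t s)
          + γ * ∑ s', (∑ a, π (t+1) s a * P s a s') * (v (t+1) s' - v t s')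
        have h1 := hv (t+1) s
        have h2 := hmix (t+1) t s
        have h3 : ∑ s', (∑ a, π (t+1) s a * P s a s') * (v (t+1) s' - v t s')
            = (∑ s', (∑ a, π (t+1) s a * P s a s') * v (t+1) s')
              - ∑ s', (∑ a, π (t+1) s a * P s a s') * v t s' := by
          rw [← Finset.sum_sub_distrib]
          exact Finset.sum_congr rfl fun s' _ => by ring
        rw [h3]
        linarith)
    intro s
    have := h s
    linarith
  have hvmono : ∀ s, Monotone fun t => v t s := fun s =>
    monotone_nat_of_le_succ fun t => hmonov t s
  -- log-partition-function bound
  have hlogZ : ∀ t s, Real.log (∑ b, π t s b * Real.exp (η * Q t s b))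
      ≤ η * v t s + η ^ 2 * (1 / (1 - γ)) ^ 2 / 2 := by
    intro t s
    have h := stmt15_aux_mgf (π t s) (Q t s) (hprob t s).1 (hprob t s).2.1
      (1 / (1 - γ)) η
      (fun a b => abs_le.2 ⟨by linarith [hQ0 t s a, hQR t s b], by
        linarith [hQ0 t s b, hQR t s a]⟩)
    rw [hvQ t s]
    exact h
  -- per-step KL-type inequality
  have hKL : ∀ t s, η * (Q t s (astar s) - v t s)
      ≤ Real.log (π (t+1) s (astar s)) - Real.log (π t s (astar s))
        + η ^ 2 * (1 / (1 - γ)) ^ 2 / 2 := by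
    intro t s
    have hπpos : 0 < π t s (astar s) := (hprob t s).2.2.2 _ (hastar_pos s)
    have hZ := hZpos t s
    have hlog : Real.log (π (t+1) s (astar s))
        = Real.log (π t s (astar s)) + η * Q t s (astar s)
          - Real.log (∑ b, π t s b * Real.exp (η * Q t s b)) := by
      rw [hπs' t s (astar s), Real.log_div (by positivity) hZ.ne',
        Real.log_mul hπpos.ne' (Real.exp_ne_zero _), Real.log_exp]
    have := hlogZ t s
    linarith
  -- telescoping
  have htel : ∀ s, ∑ t ∈ Finset.range k, η * (Q t s (astar s) - v t s)
      ≤ L + (k:ℝ) * (η ^ 2 * (1 / (1 - γ)) ^ 2 / 2) := by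
    intro s
    have step1 : ∑ t ∈ Finset.range k, η * (Q t s (astar s) - v t s)
        ≤ ∑ t ∈ Finset.range k, (Real.log (π (t+1) s (astar s))
          - Real.log (π t s (astar s)) + η ^ 2 * (1 / (1 - γ)) ^ 2 / 2) :=
      Finset.sum_le_sum fun t _ => hKL t s
    have step2 : ∑ t ∈ Finset.range k, (Real.log (π (t+1) s (astar s))
          - Real.log (π t s (astar s)) + η ^ 2 * (1 / (1 - γ)) ^ 2 / 2)
        = (Real.log (π k s (astar s)) - Real.log (π 0 s (astar s)))
          + (k:ℝ) * (η ^ 2 * (1 / (1 - γ)) ^ 2 / 2) := by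
      rw [Finset.sum_add_distrib,
        Finset.sum_range_sub (fun t => Real.log (π t s (astar s))),
        Finset.sum_const, Finset.card_range, nsmul_eq_mul]
    have hπk1 : π k s (astar s) ≤ 1 := by
      have h1 : π k s (astar s) ≤ ∑ a, π k s a :=
        Finset.single_le_sum (fun a _ => (hprob k s).1 a) (Finset.mem_univ _)
      rw [(hprob k s).2.1] at h1
      exact h1
    have hlogk : Real.log (π k s (astar s)) ≤ 0 :=
      Real.log_nonpos ((hprob k s).2.2.2 _ (hastar_pos s)).le hπk1
    have hlog0 : - Real.log (π 0 s (astar s)) ≤ L := by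
      have hcardpos : 0 < ((Finset.univ.filter (fun b => 0 < πD s b)).card : ℝ) := by
        exact_mod_cast Finset.card_pos.2 (hne s)
      rw [hπ0 s (astar s), if_pos (hastar_pos s), one_div, Real.log_inv, neg_neg]
      have hle : ((Finset.univ.filter (fun b => 0 < πD s b)).card : ℝ)
          ≤ (Fintype.card A : ℝ) := by
        exact_mod_cast (Finset.card_filter_le _ _).trans (le_of_eq Finset.card_univ)
      exact Real.log_le_log hcardpos hle
    calc ∑ t ∈ Finset.range k, η * (Q t s (astar s) - v t s)
        ≤ (Real.log (π k s (astar s)) - Real.log (π 0 s (astar s)))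
          + (k:ℝ) * (η ^ 2 * (1 / (1 - γ)) ^ 2 / 2) := by rw [← step2]; exact step1
      _ ≤ L + (k:ℝ) * (η ^ 2 * (1 / (1 - γ)) ^ 2 / 2) := by linarith
  -- value-difference recursion along the optimal in-sample action
  have hdiff : ∀ t s, vD s - v t s = (Q t s (astar s) - v t s)
      + γ * ∑ s', P s (astar s) s' * (vD s' - v t s') := by
    intro t s
    have h1 := hastar_eq s
    have h2 := hQ t s (astar s)
    have h3 : ∑ s', P s (astar s) s' * (vD s' - v t s')
        = (∑ s', P s (astar s) s' * vD s') - ∑ s', P s (astar s) s' * v t s' := by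
      rw [← Finset.sum_sub_distrib]
      exact Finset.sum_congr rfl fun s' _ => by ring
    rw [h3]
    have h4 : γ * ((∑ s', P s (astar s) s' * vD s') - ∑ s', P s (astar s) s' * v t s')
        = γ * (∑ s', P s (astar s) s' * vD s') - γ * ∑ s', P s (astar s) s' * v t s' := by
      ring
    rw [h4]
    linarith
  -- summed recursion and contraction bound
  set B : ℝ := (L + (k:ℝ) * (η ^ 2 * (1 / (1 - γ)) ^ 2 / 2)) / η with hBdef
  have hWle : ∀ s, (∑ t ∈ Finset.range k, (vD s - v t s)) ≤ B / (1 - γ) := by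
    refine stmt15_aux_le (fun s s' => P s (astar s) s') (fun s s' => hP0 s (astar s) s')
      (fun s => hP1 s (astar s)) γ hγ0 hγ1 _
      (fun s => ∑ t ∈ Finset.range k, (Q t s (astar s) - v t s)) B ?_ ?_
    · intro s
      rw [hBdef, le_div_iff₀ hηpos]
      have h := htel s
      rw [← Finset.mul_sum] at h
      linarith
    · intro s
      have h1 : ∑ t ∈ Finset.range k, (vD s - v t s)
          = ∑ t ∈ Finset.range k, ((Q t s (astar s) - v t s)
            + γ * ∑ s', P s (astar s) s' * (vD s' - v t s')) :=
        Finset.sum_congr rfl fun t _ => hdiff t s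
      rw [h1, Finset.sum_add_distrib, ← Finset.mul_sum]
      congr 1
      congr 1
      rw [Finset.sum_comm]
      exact Finset.sum_congr rfl fun s' _ => (Finset.mul_sum _ _ _).symm
  -- averaging and the last iterate
  intro s
  have hfin : (k:ℝ) * (vD s - v (k-1) s) ≤ ∑ t ∈ Finset.range k, (vD s - v t s) := by
    calc (k:ℝ) * (vD s - v (k-1) s) = ∑ _t ∈ Finset.range k, (vD s - v (k-1) s) := by
          rw [Finset.sum_const, Finset.card_range, nsmul_eq_mul]
      _ ≤ ∑ t ∈ Finset.range k, (vD s - v t s) := by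
          refine Finset.sum_le_sum fun t ht => ?_
          have : v t s ≤ v (k-1) s := hvmono s (Nat.le_pred_of_lt (Finset.mem_range.1 ht))
          linarith
  have hmain : vD s - v (k-1) s ≤ B / (1 - γ) / (k:ℝ) := by
    rw [le_div_iff₀ hkpos]
    calc (vD s - v (k-1) s) * (k:ℝ) = (k:ℝ) * (vD s - v (k-1) s) := by ring
      _ ≤ ∑ t ∈ Finset.range k, (vD s - v t s) := hfin
      _ ≤ B / (1 - γ) := hWle s
  have harith : B / (1 - γ) / (k:ℝ) = (1 / (1 - γ) ^ 2) * σ := by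
    have hL' : L = σ ^ 2 * (k:ℝ) / 2 := by
      rw [hσ2]
      field_simp
    rw [hBdef, hL', hηdef]
    field_simp
    ring
  linarith [hmain, le_of_eq harith]
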